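/- arXiv:2602.04668 — 2 statements merged into one kernel-verified Lean document; each statement's English description precedes it below -/
import Mathlib

section
/- For $\alpha>0$, $|w|<1$, and $t\in[-1,1]$, the Gegenbauer generating-function identity holds: $\sum_{k=0}^{\infty} C_k^{(\alpha)}(t) w^k = \frac{1}{(1-2tw+w^2)^{\alpha}}$. -/
noncomputable def gegenbauer (α : ℝ) : ℕ → ℝ → ℝ
  | 0, _ => 1
  | 1, t => 2 * α * t
  | (k + 2), t =>
      (2 * t * ((k : ℝ) + 2 + α - 1) * gegenbauer α (k + 1) t -
        ((k : ℝ) + 2 + 2 * α - 2) * gegenbauer α k t) / ((k : ℝ) + 2)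

/-!
Write `1 - 2tw + w² = (1 - zw)(1 - z̄w)` with `z = exp (i arccos t)` on the unit circle.
Each factor `(1 - zw)^(-α)` is a binomial series converging for `|w| < 1`, so their Cauchy
product converges to the right-hand side. Formally, `G = (1 - X)^(-α)` satisfies
`(1 - X) G' = α G`, hence `A = G(zX) G(z̄X)` satisfies `(1 - 2tX + X²) A' = 2α (t - X) A`,
and comparing coefficients in this differential equation gives exactly the three-term
recurrence of the Gegenbauer polynomials.
-/

open PowerSeries Finset ComplexConjugate

namespace PowerSeries

variable {R : Type*} [CommRing R]

theorem rescale_C (a b : R) : rescale b (C a) = C a := by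
  ext n
  rcases n with _ | n <;> simp [coeff_rescale, coeff_C]

theorem constantCoeff_rescale (a : R) (f : R⟦X⟧) :
    constantCoeff (rescale a f) = constantCoeff f := by
  rw [← coeff_zero_eq_constantCoeff_apply, coeff_rescale, pow_zero, one_mul,
    coeff_zero_eq_constantCoeff_apply]

theorem derivative_rescale (a : R) (f : R⟦X⟧) :
    d⁄dX R (rescale a f) = C a * rescale a (d⁄dX R f) := by
  ext n
  simp only [coeff_derivative, coeff_rescale, coeff_C_mul]
  ring

theorem coeff_X_mul_derivative (f : R⟦X⟧) (n : ℕ) :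
    coeff n (X * d⁄dX R f) = n * coeff n f := by
  cases n with
  | zero => simp
  | succ n => rw [coeff_succ_X_mul, coeff_derivative, mul_comm]; push_cast; ring

theorem one_sub_mul_derivative_rescale {a : R} {f : R⟦X⟧}
    (hf : (1 - X) * d⁄dX R f = C a * f) (b : R) :
    (1 - C b * X) * d⁄dX R (rescale b f) = C (a * b) * rescale b f := by
  have h := congrArg (rescale b) hf
  simp only [map_mul, map_sub, map_one, rescale_X, rescale_C] at h
  rw [derivative_rescale, map_mul]
  linear_combination C b * h

theorem gegenbauer_ode_rescale_mul_rescale {a : R} {f : R⟦X⟧}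
    (hf : (1 - X) * d⁄dX R f = C a * f) {b c s : R} (hs : b + c = s) (hbc : b * c = 1) :
    (1 - C s * X + X ^ 2) * d⁄dX R (rescale b f * rescale c f) =
      C a * (C s - 2 * X) * (rescale b f * rescale c f) := by
  have hb := one_sub_mul_derivative_rescale hf b
  have hc := one_sub_mul_derivative_rescale hf c
  have hbc' : C b * C c = 1 := by rw [← map_mul, hbc, map_one]
  rw [Derivation.leibniz, smul_eq_mul, smul_eq_mul, ← hs, map_add]
  simp only [map_mul] at hb hc
  linear_combination (1 - C c * X) * rescale c f * hb + (1 - C b * X) * rescale b f * hc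
    - (X ^ 2 * (rescale b f * d⁄dX R (rescale c f) + rescale c f * d⁄dX R (rescale b f))
      + 2 * C a * X * (rescale b f * rescale c f)) * hbc'

theorem coeff_one_of_gegenbauer_ode {A : R⟦X⟧} {a s : R}
    (h : (1 - C s * X + X ^ 2) * d⁄dX R A = C a * (C s - 2 * X) * A) :
    coeff 1 A = a * s * coeff 0 A := by
  have h' := congrArg (coeff 0) h
  rw [show (1 - C s * X + X ^ 2) * d⁄dX R A
      = d⁄dX R A - X * (C s * d⁄dX R A - X * d⁄dX R A) by ring,
    show C a * (C s - 2 * X) * A = C (a * s) * A - X * (C (2 * a) * A) by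
      simp only [map_mul, map_ofNat]; ring] at h'
  simp only [map_sub, coeff_zero_X_mul, coeff_derivative, coeff_C_mul, sub_zero] at h'
  linear_combination h'

theorem coeff_succ_succ_of_gegenbauer_ode {A : R⟦X⟧} {a s : R}
    (h : (1 - C s * X + X ^ 2) * d⁄dX R A = C a * (C s - 2 * X) * A) (n : ℕ) :
    (n + 2) * coeff (n + 2) A = s * (n + 1 + a) * coeff (n + 1) A - (n + 2 * a) * coeff n A := by
  have h' := congrArg (coeff (n + 1)) h
  rw [show (1 - C s * X + X ^ 2) * d⁄dX R A
      = d⁄dX R A - C s * (X * d⁄dX R A) + X * (X * d⁄dX R A) by ring,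
    show C a * (C s - 2 * X) * A = C (a * s) * A - C (2 * a) * (X * A) by
      simp only [map_mul, map_ofNat]; ring] at h'
  simp only [map_sub, map_add, coeff_C_mul, coeff_succ_X_mul, coeff_X_mul_derivative,
    coeff_derivative] at h'
  push_cast at h'
  linear_combination h'

variable [BinomialRing R]

/-- The binomial series of `(1 - X)^(-a)`. -/
noncomputable def invOneSubCpow (a : R) : R⟦X⟧ := mk fun n => Ring.choose (a + n - 1) n

theorem succ_mul_coeff_succ_invOneSubCpow (a : R) (n : ℕ) :
    (n + 1) * coeff (n + 1) (invOneSubCpow a) = (a + n) * coeff n (invOneSubCpow a) := by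
  have h := Ring.choose_smul_choose (a + n) (Nat.le_add_left 1 n)
  simp only [Nat.choose_one_right, Ring.choose_one_right, Nat.add_sub_cancel, nsmul_eq_mul] at h
  simp only [invOneSubCpow, coeff_mk]
  push_cast
  rw [show a + (n + 1) - 1 = a + n by ring, show a + n - 1 = a + n - (1 : ℕ) by simp]
  exact_mod_cast h

theorem constantCoeff_invOneSubCpow (a : R) : constantCoeff (invOneSubCpow a) = 1 := by
  rw [invOneSubCpow, ← coeff_zero_eq_constantCoeff_apply, coeff_mk]
  simp

theorem one_sub_X_mul_derivative_invOneSubCpow (a : R) :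
    (1 - X) * d⁄dX R (invOneSubCpow a) = C a * invOneSubCpow a := by
  ext n
  have h := succ_mul_coeff_succ_invOneSubCpow a n
  rw [sub_mul, one_mul, map_sub, coeff_X_mul_derivative, coeff_derivative, coeff_C_mul]
  linear_combination h

end PowerSeries

theorem coeff_eq_gegenbauer_of_ode {𝕜 : Type*} [RCLike 𝕜] {α t : ℝ} {A : 𝕜⟦X⟧}
    (h0 : constantCoeff A = 1)
    (hode : (1 - C (2 * t : 𝕜) * X + X ^ 2) * d⁄dX 𝕜 A =
      C (α : 𝕜) * (C (2 * t : 𝕜) - 2 * X) * A)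
    (n : ℕ) : coeff n A = gegenbauer α n t := by
  have h0' : coeff 0 A = 1 := by simpa using h0
  induction n using Nat.twoStepInduction with
  | zero => simpa [gegenbauer] using h0'
  | one => rw [coeff_one_of_gegenbauer_ode hode, h0', gegenbauer]; push_cast; ring
  | more n ih ih1 =>
    have hrec := coeff_succ_succ_of_gegenbauer_ode hode n
    rw [ih, ih1] at hrec
    have hn : (n : 𝕜) + 2 ≠ 0 := by exact_mod_cast (n + 1).succ_ne_zero
    rw [gegenbauer]
    push_cast
    rw [eq_div_iff hn]
    linear_combination hrec

theorem PowerSeries.hasSum_coeff_mul_mul_pow {𝕜 : Type*} [NormedField 𝕜] [CompleteSpace 𝕜]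
    {f g : 𝕜⟦X⟧} {u x y : 𝕜}
    (hf : Summable fun n => ‖coeff n f * u ^ n‖)
    (hg : Summable fun n => ‖coeff n g * u ^ n‖)
    (hfx : HasSum (fun n => coeff n f * u ^ n) x)
    (hgy : HasSum (fun n => coeff n g * u ^ n) y) :
    HasSum (fun n => coeff n (f * g) * u ^ n) (x * y) := by
  have hterm : ∀ n, coeff n (f * g) * u ^ n =
      ∑ kl ∈ antidiagonal n, coeff kl.1 f * u ^ kl.1 * (coeff kl.2 g * u ^ kl.2) := by
    intro n
    rw [coeff_mul, sum_mul]
    refine sum_congr rfl fun kl hkl => ?_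
    rw [← mem_antidiagonal.mp hkl, pow_add]
    ring
  simp_rw [hterm]
  rw [← hfx.tsum_eq, ← hgy.tsum_eq,
    tsum_mul_tsum_eq_tsum_sum_antidiagonal_of_summable_norm hf hg]
  exact (summable_norm_sum_mul_antidiagonal_of_summable_norm hf hg).of_norm.hasSum

theorem PowerSeries.hasSum_coeff_invOneSubCpow_mul_pow (a : ℂ) {u : ℂ} (hu : ‖u‖ < 1) :
    HasSum (fun n => coeff n (invOneSubCpow a) * u ^ n) (1 / (1 - u) ^ a) := by
  have h := (Complex.one_div_one_sub_cpow_hasFPowerSeriesOnBall_zero a).hasSum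
    (y := u) (by simpa [enorm_eq_nnnorm, ← NNReal.coe_lt_one] using hu)
  simpa [FormalMultilinearSeries.ofScalars_apply_eq, invOneSubCpow, mul_comm] using h

theorem PowerSeries.summable_norm_coeff_invOneSubCpow_mul_pow (a : ℂ) {u : ℂ}
    (hu : ‖u‖ < 1) :
    Summable (fun n => ‖coeff n (invOneSubCpow a) * u ^ n‖) := by
  have h := (Complex.one_div_one_sub_cpow_hasFPowerSeriesOnBall_zero a).r_le
  have := FormalMultilinearSeries.summable_norm_apply _ (x := u)
    (lt_of_lt_of_le (by simpa [enorm_eq_nnnorm, ← NNReal.coe_lt_one] using hu) h)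
  simpa [FormalMultilinearSeries.ofScalars_apply_eq, invOneSubCpow, mul_comm] using this

theorem PowerSeries.hasSum_coeff_rescale_mul_rescale_invOneSubCpow_mul_pow (a : ℂ)
    {b c u : ℂ} (hb : ‖b * u‖ < 1) (hc : ‖c * u‖ < 1) :
    HasSum (fun n => coeff n (rescale b (invOneSubCpow a) * rescale c (invOneSubCpow a)) * u ^ n)
      (1 / (1 - b * u) ^ a * (1 / (1 - c * u) ^ a)) := by
  have hrescale : ∀ (b : ℂ) n, coeff n (rescale b (invOneSubCpow a)) * u ^ n =
      coeff n (invOneSubCpow a) * (b * u) ^ n := fun b n => by rw [coeff_rescale, mul_pow]; ring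
  apply hasSum_coeff_mul_mul_pow <;> simp only [hrescale]
  exacts [summable_norm_coeff_invOneSubCpow_mul_pow a hb,
    summable_norm_coeff_invOneSubCpow_mul_pow a hc,
    hasSum_coeff_invOneSubCpow_mul_pow a hb, hasSum_coeff_invOneSubCpow_mul_pow a hc]

theorem Complex.cpow_ofReal_mul_conj_cpow_ofReal {v : ℂ} (hv : v.arg ≠ Real.pi) (a : ℝ) :
    v ^ (a : ℂ) * conj v ^ (a : ℂ) = ((normSq v ^ a : ℝ) : ℂ) := by
  rw [conj_cpow v _ hv, conj_ofReal, mul_conj, normSq_eq_norm_sq, normSq_eq_norm_sq,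
    norm_cpow_real, ← Real.rpow_natCast, ← Real.rpow_natCast, ← Real.rpow_mul (norm_nonneg _),
    ← Real.rpow_mul (norm_nonneg _), mul_comm]

theorem Complex.normSq_one_sub_mul_ofReal {z : ℂ} (hz : ‖z‖ = 1) (w : ℝ) :
    normSq (1 - z * w) = 1 - 2 * z.re * w + w ^ 2 := by
  have h := normSq_eq_norm_sq z
  rw [hz, normSq_apply] at h
  simp only [normSq_apply, sub_re, sub_im, mul_re, mul_im, ofReal_re, ofReal_im, one_re, one_im]
  linear_combination w ^ 2 * h

theorem Complex.one_sub_mul_cpow_mul_one_sub_conj_mul_cpow {z : ℂ} (hz : ‖z‖ = 1) {w : ℝ}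
    (hw : |w| < 1) (a : ℝ) :
    (1 - z * w) ^ (a : ℂ) * (1 - conj z * w) ^ (a : ℂ) =
      ((1 - 2 * z.re * w + w ^ 2) ^ a : ℝ) := by
  have hslit : 1 - z * w ∈ slitPlane := by
    simpa [sub_eq_add_neg] using
      mem_slitPlane_of_norm_lt_one (z := -(z * w)) (by simpa [hz] using hw)
  rw [show 1 - conj z * w = conj (1 - z * w) by simp,
    cpow_ofReal_mul_conj_cpow_ofReal (slitPlane_arg_ne_pi hslit), normSq_one_sub_mul_ofReal hz]

theorem gegenbauer_generating_function_general (α w t : ℝ) (hw : |w| < 1)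
    (ht : t ∈ Set.Icc (-1 : ℝ) 1) :
    ∑' k : ℕ, gegenbauer α k t * w ^ k = 1 / (1 - 2 * t * w + w ^ 2) ^ α := by
  set z : ℂ := Complex.exp (Real.arccos t * Complex.I)
  have hz : ‖z‖ = 1 := Complex.norm_exp_ofReal_mul_I _
  have hzre : z.re = t := by rw [Complex.exp_ofReal_mul_I_re, Real.cos_arccos ht.1 ht.2]
  have hadd : z + conj z = 2 * t := by rw [Complex.add_conj, hzre]; push_cast; ring
  have hmul : z * conj z = 1 := by rw [Complex.mul_conj', hz]; simp
  have hcoeff := coeff_eq_gegenbauer_of_ode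
    (by simp [constantCoeff_rescale, constantCoeff_invOneSubCpow])
    (gegenbauer_ode_rescale_mul_rescale
      (one_sub_X_mul_derivative_invOneSubCpow (α : ℂ)) hadd hmul)
  have hsum := hasSum_coeff_rescale_mul_rescale_invOneSubCpow_mul_pow (α : ℂ)
    (u := w) (b := z) (c := conj z) (by simpa [hz] using hw) (by simpa [hz] using hw)
  rw [one_div_mul_one_div, Complex.one_sub_mul_cpow_mul_one_sub_conj_mul_cpow hz hw,
    hzre] at hsum
  simp only [hcoeff] at hsum
  exact (Complex.hasSum_ofReal.mp (by simpa using hsum)).tsum_eq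

theorem gegenbauer_generating_function (α w t : ℝ) (hα : 0 < α) (hw : |w| < 1)
    (ht : t ∈ Set.Icc (-1 : ℝ) 1) :
    ∑' k : ℕ, gegenbauer α k t * w ^ k = 1 / (1 - 2 * t * w + w ^ 2) ^ α :=
  gegenbauer_generating_function_general α w t hw ht
end

section
/- Let $\varphi$ be an Orlicz N-function with $\liminf_{x\to 0}\varphi(x)/x^2 > 0$. The functional $\tau_\varphi(\xi) = \sup_{\lambda>0} \frac{\varphi^{(-1)}(\ln E\exp\{\lambda\xi\})}{\lambda}$ is subadditive on $Sub_\varphi(\Omega)$: for $\xi,\eta \in Sub_\varphi(\Omega)$, $\tau_\varphi(\xi+\eta) \leq \tau_\varphi(\xi) + \tau_\varphi(\eta)$. -/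
noncomputable def expMoment {Ω : Type*} [MeasurableSpace Ω] (μ : MeasureTheory.Measure Ω)
    (ξ : Ω → ℝ) (l : ℝ) : ℝ := ∫ ω, Real.exp (l * ξ ω) ∂μ

noncomputable def tauPhi {Ω : Type*} [MeasurableSpace Ω] (μ : MeasureTheory.Measure Ω)
    (φinv : ℝ → ℝ) (ξ : Ω → ℝ) : ℝ :=
  ⨆ l : {x : ℝ // 0 < x}, φinv (Real.log (expMoment μ ξ l.1)) / l.1

def IsOrliczN (φ : ℝ → ℝ) : Prop :=
  Continuous φ ∧ (∀ x, φ (-x) = φ x) ∧ ConvexOn ℝ Set.univ φ ∧ φ 0 = 0 ∧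
    (∀ x ≠ 0, 0 < φ x) ∧
    Filter.Tendsto (fun x => φ x / x) (nhdsWithin 0 (Set.Ioi 0)) (nhds 0) ∧
    Filter.Tendsto (fun x => φ x / x) Filter.atTop Filter.atTop

def MemSubPhi {Ω : Type*} [MeasurableSpace Ω] (μ : MeasureTheory.Measure Ω)
    (φ : ℝ → ℝ) (ξ : Ω → ℝ) : Prop :=
  (∫ ω, ξ ω ∂μ) = 0 ∧
  (∀ l : ℝ, MeasureTheory.Integrable (fun ω => Real.exp (l * ξ ω)) μ) ∧
  ∃ a > 0, ∀ l : ℝ, expMoment μ ξ l ≤ Real.exp (φ (l * a))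

section Aux

open MeasureTheory Real Filter

instance posRealNonempty : Nonempty {x : ℝ // 0 < x} := ⟨⟨1, one_pos⟩⟩

lemma orlicz_nonneg {φ : ℝ → ℝ} (hφ : IsOrliczN φ) (x : ℝ) : 0 ≤ φ x := by
  rcases eq_or_ne x 0 with h | h
  · simp [h, hφ.2.2.2.1]
  · exact (hφ.2.2.2.2.1 x h).le

lemma orlicz_mono {φ : ℝ → ℝ} (hφ : IsOrliczN φ) {x y : ℝ} (hx : 0 ≤ x) (hxy : x ≤ y) :
    φ x ≤ φ y := by
  rcases eq_or_lt_of_le (hx.trans hxy) with h | hy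
  · have hx0 : x = 0 := le_antisymm (hxy.trans h.symm.le) hx
    rw [hx0, ← h]
  · have ht0 : 0 ≤ x / y := div_nonneg hx hy.le
    have ht1 : x / y ≤ 1 := div_le_one_of_le₀ hxy hy.le
    have htb : (0:ℝ) ≤ 1 - x / y := by linarith
    have hab : x / y + (1 - x / y) = 1 := by ring
    have := hφ.2.2.1.2 (Set.mem_univ y) (Set.mem_univ 0) ht0 htb hab
    simp only [smul_eq_mul, mul_zero, add_zero, hφ.2.2.2.1, mul_zero] at this
    have hxy' : x / y * y = x := div_mul_cancel₀ x hy.ne'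
    rw [hxy'] at this
    calc φ x ≤ x / y * φ y := this
    _ ≤ 1 * φ y := by
        have := orlicz_nonneg hφ y
        nlinarith
    _ = φ y := one_mul _

lemma orlicz_surj {φ : ℝ → ℝ} (hφ : IsOrliczN φ) {y : ℝ} (hy : 0 ≤ y) :
    ∃ x, 0 ≤ x ∧ φ x = y := by
  obtain ⟨N, hN⟩ := (tendsto_atTop.1 hφ.2.2.2.2.2.2 (y + 1)).exists_forall_of_atTop
  set x0 : ℝ := max N 1 with hx0
  have hx01 : (1:ℝ) ≤ x0 := le_max_right _ _
  have hx0pos : (0:ℝ) < x0 := lt_of_lt_of_le one_pos hx01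
  have h1 : y + 1 ≤ φ x0 / x0 := hN x0 (le_max_left _ _)
  have h2 : y ≤ φ x0 := by
    have : (y+1) * x0 ≤ φ x0 := (le_div_iff₀ hx0pos).1 h1
    nlinarith
  have := intermediate_value_Icc hx0pos.le (hφ.1.continuousOn (s := Set.Icc 0 x0))
  rw [hφ.2.2.2.1] at this
  obtain ⟨x, hx, hfx⟩ := this ⟨hy, h2⟩
  exact ⟨x, hx.1, hfx⟩

lemma phinv_nonneg {φ φinv : ℝ → ℝ} (hφ : IsOrliczN φ)
    (hinv1 : ∀ x ≥ (0 : ℝ), φinv (φ x) = x) {y : ℝ} (hy : 0 ≤ y) : 0 ≤ φinv y := by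
  obtain ⟨x, hx, rfl⟩ := orlicz_surj hφ hy
  rw [hinv1 x hx]; exact hx

lemma phinv_mono {φ φinv : ℝ → ℝ} (hφ : IsOrliczN φ)
    (hinv1 : ∀ x ≥ (0 : ℝ), φinv (φ x) = x) (hinv2 : ∀ y ≥ (0 : ℝ), φ (φinv y) = y)
    {y1 y2 : ℝ} (hy1 : 0 ≤ y1) (h : y1 ≤ y2) : φinv y1 ≤ φinv y2 := by
  by_contra hlt
  push_neg at hlt
  have h1 := hinv2 y1 hy1
  have h2 := hinv2 y2 (hy1.trans h)
  have hn2 : 0 ≤ φinv y2 := phinv_nonneg hφ hinv1 (hy1.trans h)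
  have : φ (φinv y2) ≤ φ (φinv y1) := orlicz_mono hφ hn2 hlt.le
  rw [h1, h2] at this
  have hy12 : y1 = y2 := le_antisymm h this
  rw [hy12] at hlt
  exact lt_irrefl _ hlt

variable {Ω : Type*} [MeasurableSpace Ω] (μ : MeasureTheory.Measure Ω)
  [MeasureTheory.IsProbabilityMeasure μ]

omit [MeasureTheory.IsProbabilityMeasure μ] in
lemma aemeas_of_int (ζ : Ω → ℝ)
    (hint : ∀ l : ℝ, Integrable (fun ω => Real.exp (l * ζ ω)) μ) : AEMeasurable ζ μ := by
  have h1 : AEMeasurable (fun ω => Real.exp (1 * ζ ω)) μ := (hint 1).aemeasurable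
  have h2 : AEMeasurable (fun ω => Real.log (Real.exp (1 * ζ ω))) μ :=
    Real.measurable_log.comp_aemeasurable h1
  simpa [Real.log_exp] using h2

omit [MeasureTheory.IsProbabilityMeasure μ] in
lemma integrable_of_exp (ζ : Ω → ℝ)
    (hint : ∀ l : ℝ, Integrable (fun ω => Real.exp (l * ζ ω)) μ) : Integrable ζ μ := by
  have hg : Integrable (fun ω => Real.exp (1 * ζ ω) + Real.exp ((-1) * ζ ω)) μ :=
    (hint 1).add (hint (-1))
  refine Integrable.mono hg ((aemeas_of_int μ ζ hint).aestronglyMeasurable) ?_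
  filter_upwards with ω
  have e1 := Real.add_one_le_exp (ζ ω)
  have e2 := Real.add_one_le_exp (-ζ ω)
  have p1 := Real.exp_pos (ζ ω)
  have p2 := Real.exp_pos (-ζ ω)
  rw [Real.norm_eq_abs, Real.norm_eq_abs]
  rw [abs_le, abs_of_nonneg (by positivity : (0:ℝ) ≤ Real.exp (1 * ζ ω) + Real.exp ((-1) * ζ ω))]
  simp only [one_mul, neg_one_mul]
  constructor <;> nlinarith

lemma one_le_expMoment' (ζ : Ω → ℝ) (hζ : Integrable ζ μ) (h0 : (∫ ω, ζ ω ∂μ) = 0)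
    {l : ℝ} (hexp : Integrable (fun ω => Real.exp (l * ζ ω)) μ) :
    1 ≤ expMoment μ ζ l := by
  have hlhs : Integrable (fun ω => l * ζ ω + 1) μ :=
    ((hζ.const_mul l).add (integrable_const 1))
  have hmono : ∫ ω, (l * ζ ω + 1) ∂μ ≤ ∫ ω, Real.exp (l * ζ ω) ∂μ :=
    integral_mono hlhs hexp (fun ω => Real.add_one_le_exp _)
  have : ∫ ω, (l * ζ ω + 1) ∂μ = 1 := by
    rw [integral_add (hζ.const_mul l) (integrable_const 1),
      MeasureTheory.integral_const_mul, h0]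
    simp
  rw [this] at hmono
  exact hmono

/-- Key facts about `tauPhi` of a sub-φ random variable. -/
lemma tau_facts {φ φinv : ℝ → ℝ} (hφ : IsOrliczN φ)
    (hinv1 : ∀ x ≥ (0 : ℝ), φinv (φ x) = x) (hinv2 : ∀ y ≥ (0 : ℝ), φ (φinv y) = y)
    (ζ : Ω → ℝ) (hζ : MemSubPhi μ φ ζ) :
    0 ≤ tauPhi μ φinv ζ ∧
      ∀ l : ℝ, 0 < l → φinv (Real.log (expMoment μ ζ l)) ≤ l * tauPhi μ φinv ζ := by
  obtain ⟨h0, hint, a, ha, hbound⟩ := hζ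
  have hζint : Integrable ζ μ := integrable_of_exp μ ζ hint
  have hone : ∀ l : ℝ, 1 ≤ expMoment μ ζ l := fun l =>
    one_le_expMoment' μ ζ hζint h0 (hint l)
  have hlog0 : ∀ l : ℝ, 0 ≤ Real.log (expMoment μ ζ l) := fun l =>
    Real.log_nonneg (hone l)
  have hbdd : BddAbove (Set.range fun l : {x : ℝ // 0 < x} =>
      φinv (Real.log (expMoment μ ζ l.1)) / l.1) := by
    refine ⟨a, ?_⟩
    rintro x ⟨⟨l, hl⟩, rfl⟩
    have hlogle : Real.log (expMoment μ ζ l) ≤ φ (l * a) := by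
      have := hbound l
      calc Real.log (expMoment μ ζ l) ≤ Real.log (Real.exp (φ (l * a))) :=
            Real.log_le_log (lt_of_lt_of_le one_pos (hone l)) this
      _ = φ (l * a) := Real.log_exp _
    have : φinv (Real.log (expMoment μ ζ l)) ≤ φinv (φ (l * a)) :=
      phinv_mono hφ hinv1 hinv2 (hlog0 l) hlogle
    rw [hinv1 (l * a) (by positivity)] at this
    exact (div_le_iff₀ hl).2 (by linarith [this])
  constructor
  · have h1 : φinv (Real.log (expMoment μ ζ 1)) / 1 ≤ tauPhi μ φinv ζ :=
      le_ciSup hbdd ⟨1, one_pos⟩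
    have h2 : 0 ≤ φinv (Real.log (expMoment μ ζ 1)) / 1 := by
      have := phinv_nonneg hφ hinv1 (hlog0 1)
      positivity
    linarith
  · intro l hl
    have h1 : φinv (Real.log (expMoment μ ζ l)) / l ≤ tauPhi μ φinv ζ :=
      le_ciSup hbdd ⟨l, hl⟩
    calc φinv (Real.log (expMoment μ ζ l)) = φinv (Real.log (expMoment μ ζ l)) / l * l := by
          field_simp
    _ ≤ tauPhi μ φinv ζ * l := by
          exact mul_le_mul_of_nonneg_right h1 hl.le
    _ = l * tauPhi μ φinv ζ := mul_comm _ _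

end Aux

set_option maxHeartbeats 1000000 in
open Filter Topology in
theorem tauPhi_subadditive {Ω : Type*} [MeasurableSpace Ω] (μ : MeasureTheory.Measure Ω)
    [MeasureTheory.IsProbabilityMeasure μ] (φ φinv : ℝ → ℝ) (hφ : IsOrliczN φ)
    (hliminf : 0 < Filter.liminf (fun x => φ x / x ^ 2) (𝓝[≠] (0 : ℝ)))
    (hinv1 : ∀ x ≥ (0 : ℝ), φinv (φ x) = x)
    (hinv2 : ∀ y ≥ (0 : ℝ), φ (φinv y) = y)
    (ξ η : Ω → ℝ) (hξ : MemSubPhi μ φ ξ) (hη : MemSubPhi μ φ η) :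
    tauPhi μ φinv (fun ω => ξ ω + η ω) ≤ tauPhi μ φinv ξ + tauPhi μ φinv η := by
  classical
  open MeasureTheory Real in
  obtain ⟨hτ1nn, hτ1⟩ := tau_facts μ hφ hinv1 hinv2 ξ hξ
  obtain ⟨hτ2nn, hτ2⟩ := tau_facts μ hφ hinv1 hinv2 η hη
  set τ1 := tauPhi μ φinv ξ with hτ1def
  set τ2 := tauPhi μ φinv η with hτ2def
  refine le_of_forall_pos_le_add fun ε hε => ?_
  set ε2 : ℝ := ε / 2 with hε2def
  have hε2 : 0 < ε2 := by positivity
  set T : ℝ := τ1 + τ2 + ε with hTdef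
  have hT : 0 < T := by positivity
  have hTsplit : T = (τ1 + ε2) + (τ2 + ε2) := by rw [hTdef, hε2def]; ring
  set p : ℝ := T / (τ1 + ε2) with hpdef
  set q : ℝ := T / (τ2 + ε2) with hqdef
  have hτ1ε : 0 < τ1 + ε2 := by positivity
  have hτ2ε : 0 < τ2 + ε2 := by positivity
  have hp : 0 < p := div_pos hT hτ1ε
  have hq : 0 < q := div_pos hT hτ2ε
  have hpT : p * (τ1 + ε2) = T := div_mul_cancel₀ T hτ1ε.ne'
  have hqT : q * (τ2 + ε2) = T := div_mul_cancel₀ T hτ2ε.ne'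
  have hsum : 1 / p + 1 / q = 1 := by
    rw [hpdef, hqdef]
    field_simp
    linarith [hTsplit]
  clear_value τ1 τ2 ε2 T p q
  -- suffices the bound for each positive lambda
  refine ciSup_le ?_
  rintro ⟨l, hl⟩
  -- bound for the mgf of ξ at p*l
  have key : ∀ (ζ : Ω → ℝ) (hζm : MemSubPhi μ φ ζ) (τ : ℝ), 0 ≤ τ →
      (∀ s : ℝ, 0 < s → φinv (Real.log (expMoment μ ζ s)) ≤ s * τ) →
      ∀ r : ℝ, 0 < r → r * τ ≤ l * T → expMoment μ ζ r ≤ Real.exp (φ (l * T)) := by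
    intro ζ hζm τ hτnn hτle r hr hrT
    have hζint : Integrable ζ μ := integrable_of_exp μ ζ hζm.2.1
    have hone : 1 ≤ expMoment μ ζ r := one_le_expMoment' μ ζ hζint hζm.1 (hζm.2.1 r)
    have hlog0 : 0 ≤ Real.log (expMoment μ ζ r) := Real.log_nonneg hone
    have h1 : φinv (Real.log (expMoment μ ζ r)) ≤ r * τ := hτle r hr
    have h2 : Real.log (expMoment μ ζ r) = φ (φinv (Real.log (expMoment μ ζ r))) :=
      (hinv2 _ hlog0).symm
    have h3 : φ (φinv (Real.log (expMoment μ ζ r))) ≤ φ (r * τ) :=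
      orlicz_mono hφ (phinv_nonneg hφ hinv1 hlog0) h1
    have h4 : φ (r * τ) ≤ φ (l * T) := orlicz_mono hφ (by positivity) hrT
    have h5 : Real.log (expMoment μ ζ r) ≤ φ (l * T) := by
      rw [h2]; exact h3.trans h4
    calc expMoment μ ζ r = Real.exp (Real.log (expMoment μ ζ r)) :=
          (Real.exp_log (lt_of_lt_of_le one_pos hone)).symm
    _ ≤ Real.exp (φ (l * T)) := Real.exp_le_exp.2 h5
  have hMξ : expMoment μ ξ (p * l) ≤ Real.exp (φ (l * T)) := by
    refine key ξ hξ τ1 hτ1nn hτ1 (p * l) (by positivity) ?_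
    have hml : τ1 ≤ τ1 + ε2 := le_add_of_nonneg_right hε2.le
    calc p * l * τ1 ≤ p * l * (τ1 + ε2) :=
          mul_le_mul_of_nonneg_left hml (by positivity)
    _ = l * (p * (τ1 + ε2)) := by ring
    _ = l * T := by rw [hpT]
  have hMη : expMoment μ η (q * l) ≤ Real.exp (φ (l * T)) := by
    refine key η hη τ2 hτ2nn hτ2 (q * l) (by positivity) ?_
    have hml : τ2 ≤ τ2 + ε2 := le_add_of_nonneg_right hε2.le
    calc q * l * τ2 ≤ q * l * (τ2 + ε2) :=
          mul_le_mul_of_nonneg_left hml (by positivity)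
    _ = l * (q * (τ2 + ε2)) := by ring
    _ = l * T := by rw [hqT]
  -- pointwise convexity bound
  have hptw : ∀ ω, Real.exp (l * (ξ ω + η ω)) ≤
      1 / p * Real.exp (p * l * ξ ω) + 1 / q * Real.exp (q * l * η ω) := by
    intro ω
    have := convexOn_exp.2 (Set.mem_univ (p * l * ξ ω)) (Set.mem_univ (q * l * η ω))
      (by positivity : (0:ℝ) ≤ 1 / p) (by positivity : (0:ℝ) ≤ 1 / q) hsum
    simp only [smul_eq_mul] at this
    have harg : 1 / p * (p * l * ξ ω) + 1 / q * (q * l * η ω) = l * (ξ ω + η ω) := by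
      field_simp
    rwa [harg] at this
  have hg_int : Integrable
      (fun ω => 1 / p * Real.exp (p * l * ξ ω) + 1 / q * Real.exp (q * l * η ω)) μ :=
    ((hξ.2.1 (p * l)).const_mul (1 / p)).add ((hη.2.1 (q * l)).const_mul (1 / q))
  -- the sum's mgf is at most exp (φ (l * T))
  have hMsum : expMoment μ (fun ω => ξ ω + η ω) l ≤ Real.exp (φ (l * T)) := by
    have hle : expMoment μ (fun ω => ξ ω + η ω) l ≤
        ∫ ω, (1 / p * Real.exp (p * l * ξ ω) + 1 / q * Real.exp (q * l * η ω)) ∂μ := by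
      refine integral_mono_of_nonneg ?_ hg_int ?_
      · filter_upwards with ω using (Real.exp_pos _).le
      · filter_upwards with ω using hptw ω
    have heq : ∫ ω, (1 / p * Real.exp (p * l * ξ ω) + 1 / q * Real.exp (q * l * η ω)) ∂μ
        = 1 / p * expMoment μ ξ (p * l) + 1 / q * expMoment μ η (q * l) := by
      rw [integral_add ((hξ.2.1 (p * l)).const_mul (1 / p)) ((hη.2.1 (q * l)).const_mul (1 / q)),
        MeasureTheory.integral_const_mul, MeasureTheory.integral_const_mul]
      rfl
    rw [heq] at hle
    have hp' : 0 < 1 / p := by positivity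
    have hq' : 0 < 1 / q := by positivity
    calc expMoment μ (fun ω => ξ ω + η ω) l
        ≤ 1 / p * expMoment μ ξ (p * l) + 1 / q * expMoment μ η (q * l) := hle
    _ ≤ 1 / p * Real.exp (φ (l * T)) + 1 / q * Real.exp (φ (l * T)) := by
        have := mul_le_mul_of_nonneg_left hMξ hp'.le
        have := mul_le_mul_of_nonneg_left hMη hq'.le
        linarith
    _ = Real.exp (φ (l * T)) := by
        rw [← add_mul, hsum, one_mul]
  -- integrability of the sum's exponential and lower bound 1
  have hξa : AEMeasurable ξ μ := aemeas_of_int μ ξ hξ.2.1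
  have hηa : AEMeasurable η μ := aemeas_of_int μ η hη.2.1
  have hmeas : AEStronglyMeasurable (fun ω => Real.exp (l * (ξ ω + η ω))) μ := by
    exact (Real.measurable_exp.comp_aemeasurable
      (((hξa.add hηa).const_mul l))).aestronglyMeasurable
  have hexp_int : Integrable (fun ω => Real.exp (l * (ξ ω + η ω))) μ := by
    refine Integrable.mono hg_int hmeas ?_
    filter_upwards with ω
    have hnn : (0:ℝ) ≤ 1 / p * Real.exp (p * l * ξ ω) + 1 / q * Real.exp (q * l * η ω) := by
      positivity
    rw [Real.norm_eq_abs, Real.norm_eq_abs, abs_of_nonneg (Real.exp_pos _).le,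
      abs_of_nonneg hnn]
    exact hptw ω
  have hsumint : Integrable (fun ω => ξ ω + η ω) μ :=
    (integrable_of_exp μ ξ hξ.2.1).add (integrable_of_exp μ η hη.2.1)
  have hsum0 : (∫ ω, (ξ ω + η ω) ∂μ) = 0 := by
    rw [integral_add (integrable_of_exp μ ξ hξ.2.1) (integrable_of_exp μ η hη.2.1),
      hξ.1, hη.1, add_zero]
  have hone : 1 ≤ expMoment μ (fun ω => ξ ω + η ω) l :=
    one_le_expMoment' μ _ hsumint hsum0 hexp_int
  have hlog0 : 0 ≤ Real.log (expMoment μ (fun ω => ξ ω + η ω) l) := Real.log_nonneg hone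
  -- conclude
  have hloganswer : Real.log (expMoment μ (fun ω => ξ ω + η ω) l) ≤ φ (l * T) := by
    calc Real.log (expMoment μ (fun ω => ξ ω + η ω) l)
        ≤ Real.log (Real.exp (φ (l * T))) :=
          Real.log_le_log (lt_of_lt_of_le one_pos hone) hMsum
    _ = φ (l * T) := Real.log_exp _
  have hfinal : φinv (Real.log (expMoment μ (fun ω => ξ ω + η ω) l)) ≤ l * T := by
    have := phinv_mono hφ hinv1 hinv2 hlog0 hloganswer
    rwa [hinv1 (l * T) (by positivity)] at this
  rw [div_le_iff₀ hl]
  calc φinv (Real.log (expMoment μ (fun ω => ξ ω + η ω) l)) ≤ l * T := hfinal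
  _ = T * l := mul_comm _ _
end
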